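/- For every R-module A, the S-completion Λ_S(A) = lim_{s∈S} A/sA is S-separated, i.e., the intersection over all s ∈ S of the submodules s·Λ_S(A) is zero. -/

import Mathlib

open Submodule

/-- The submodule `s·A` of an `R`-module `A`. -/
def smulTop (R : Type) [CommRing R] (s : R)
    (A : Type) [AddCommGroup A] [Module R A] : Submodule R A :=
  Ideal.span {s} • (⊤ : Submodule R A)

/-- The natural projection `A/tA → A/sA` when `s ∣ t`. -/
def transMap (R : Type) [CommRing R]
    (A : Type) [AddCommGroup A] [Module R A] (s t : R) (h : s ∣ t) :
    (A ⧸ smulTop R t A) →ₗ[R] A ⧸ smulTop R s A :=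
  Submodule.mapQ _ _ LinearMap.id (by
    rw [Submodule.comap_id]
    exact Submodule.smul_mono (Ideal.span_singleton_le_span_singleton.mpr h) le_rfl)

/-- The S-completion `Λ_S(A) = lim_{s ∈ S} A/sA`, realized as the submodule of compatible
families in `∏_{s ∈ S} A/sA`. -/
def sCompletion (R : Type) [CommRing R] (S : Submonoid R)
    (A : Type) [AddCommGroup A] [Module R A] :
    Submodule R (∀ s : S, A ⧸ smulTop R (s : R) A) where
  carrier := {x | ∀ (s t : S) (h : (s : R) ∣ (t : R)), transMap R A s t h (x t) = x s}
  add_mem' := by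
    intro x y hx hy s t h
    rw [Pi.add_apply, Pi.add_apply, map_add, hx s t h, hy s t h]
  zero_mem' := by
    intro s t h
    rw [Pi.zero_apply, Pi.zero_apply, map_zero]
  smul_mem' := by
    intro r x hx s t h
    rw [Pi.smul_apply, Pi.smul_apply, map_smul, hx s t h]

theorem mem_sCompletion (R : Type) [CommRing R] (S : Submonoid R)
    (A : Type) [AddCommGroup A] [Module R A]
    (x : ∀ s : S, A ⧸ smulTop R (s : R) A) :
    x ∈ sCompletion R S A ↔
      ∀ (s t : S) (h : (s : R) ∣ (t : R)), transMap R A s t h (x t) = x s :=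
  Iff.rfl

/-- The natural map `λ_{S,A} : A → Λ_S(A)`. -/
def lamMap (R : Type) [CommRing R] (S : Submonoid R)
    (A : Type) [AddCommGroup A] [Module R A] :
    A →ₗ[R] sCompletion R S A :=
  LinearMap.codRestrict (sCompletion R S A)
    (LinearMap.pi fun s : S => (smulTop R (s : R) A).mkQ)
    (by
      intro a s t h
      show transMap R A s t h ((smulTop R (t : R) A).mkQ a) = (smulTop R (s : R) A).mkQ a
      simp only [transMap, Submodule.mkQ_apply, Submodule.mapQ_apply, LinearMap.id_apply])

theorem mem_smulTop_iff {R : Type} [CommRing R] {s : R} {A : Type} [AddCommGroup A]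
    [Module R A] {x : A} : x ∈ smulTop R s A ↔ ∃ y : A, s • y = x := by
  rw [smulTop, ideal_span_singleton_smul, mem_smul_pointwise_iff_exists]
  simp

theorem smul_quotient_smulTop_eq_zero {R : Type} [CommRing R] (s : R) {A : Type}
    [AddCommGroup A] [Module R A] (q : A ⧸ smulTop R s A) : s • q = 0 := by
  induction q using Quotient.induction_on with
  | H a =>
    rw [← Quotient.mk_smul, Quotient.mk_eq_zero]
    exact mem_smulTop_iff.2 ⟨a, rfl⟩

theorem sCompletion_separated (R : Type) [CommRing R] (S : Submonoid R)
    (A : Type) [AddCommGroup A] [Module R A] :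
    (⨅ s : S, smulTop R (s : R) (sCompletion R S A)) = ⊥ := by
  refine (Submodule.eq_bot_iff _).2 fun x hx => Subtype.ext (funext fun s => ?_)
  -- membership in `s • Λ_S(A)` alone already kills the `s`-th component
  obtain ⟨y, rfl⟩ := mem_smulTop_iff.1 (mem_iInf _ |>.1 hx s)
  exact smul_quotient_smulTop_eq_zero (s : R) ((y : ∀ t : S, A ⧸ smulTop R (t : R) A) s)
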